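/- arXiv:1608.06384 — 5 statements merged into one kernel-verified Lean document; each statement's English description precedes it below -/
import Mathlib

section
/- For all real α, β > −1, every natural number s, and every real x: Σ_{r=0}^{s} c̄ᵒ_r · P^{(α,β)}_r(x) = c̿ᵉ_s · P^{(α+1,β)}_s(x). -/
/-!
Multiplying the contiguous relation
`(2n+α+β+3) P^{(α,β)}_{n+1} = (n+α+β+2) P^{(α+1,β)}_{n+1} - (n+β+1) P^{(α+1,β)}_n`
by `Γ(n+α+β+2)/Γ(n+β+2)` turns it into
`c̄ᵒ_{n+1} P^{(α,β)}_{n+1} = c̿ᵉ_{n+1} P^{(α+1,β)}_{n+1} - c̿ᵉ_n P^{(α+1,β)}_n`,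
so the sum telescopes. The contiguous relation is proved simultaneously with its companion
`(2n+α+β+2)(1-x) P^{(α+1,β)}_n = 2(n+α+1) P^{(α,β)}_n - 2(n+1) P^{(α,β)}_{n+1}`
by induction on `n`, using the three-term recurrences of both families.
-/

open Real MeasureTheory

noncomputable def jacA (α β : ℝ) (k : ℕ) : ℝ :=
  if k = 0 then (β - α) / (α + β + 2)
  else (β - α) * (α + β) / ((2*(k:ℝ) + α + β) * (2*(k:ℝ) + α + β + 2))

noncomputable def jacB (α β : ℝ) (k : ℕ) : ℝ :=
  2 * ((k:ℝ) + α) * ((k:ℝ) + β) / ((2*(k:ℝ) + α + β) * (2*(k:ℝ) + α + β + 1))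

noncomputable def jacC (α β : ℝ) (k : ℕ) : ℝ :=
  if k = 0 then 2 / (α + β + 2)
  else 2 * ((k:ℝ) + 1) * ((k:ℝ) + 1 + α + β) /
    ((2*(k:ℝ) + α + β + 1) * (2*(k:ℝ) + α + β + 2))

/-- The Jacobi polynomials `P^{(α,β)}_k` (as functions `ℝ → ℝ`), defined by the
three-term recurrence. -/
noncomputable def jacP (α β : ℝ) : ℕ → ℝ → ℝ
  | 0 => fun _ => 1
  | 1 => fun x => (x - jacA α β 0) / jacC α β 0
  | (k+2) => fun x =>
      ((x - jacA α β (k+1)) * jacP α β (k+1) x - jacB α β (k+1) * jacP α β k x) / jacC α β (k+1)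

/-- `c̄ᵒ_k` -/
noncomputable def cBarOdd (α β : ℝ) (k : ℕ) : ℝ :=
  if k = 0 then Real.Gamma (α + β + 2) / Real.Gamma (β + 1)
  else (2*(k:ℝ) + α + β + 1) * Real.Gamma ((k:ℝ) + α + β + 1) / Real.Gamma ((k:ℝ) + β + 1)

/-- `c̿ᵒ_k` -/
noncomputable def cBarBarOdd (α : ℝ) (k : ℕ) : ℝ :=
  Real.Gamma ((k:ℝ) + 1) * Real.Gamma (α + 1) / Real.Gamma (α + (k:ℝ) + 1)

/-- `c̄ᵉ_k` -/
noncomputable def cBarEven (α β : ℝ) (k : ℕ) : ℝ :=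
  (2*(k:ℝ) + α + β + 2) * Real.Gamma ((k:ℝ) + 1) * Real.Gamma (α + 1) /
    (2 * Real.Gamma (α + (k:ℝ) + 2))

/-- `c̿ᵉ_k` -/
noncomputable def cBarBarEven (α β : ℝ) (k : ℕ) : ℝ :=
  Real.Gamma ((k:ℝ) + α + β + 2) / Real.Gamma ((k:ℝ) + β + 1)

/-- `φᵒ_k` -/
noncomputable def phiOdd (α β : ℝ) (k : ℕ) : ℝ := cBarOdd α β k / cBarBarOdd α k

/-- `φᵉ_k` -/
noncomputable def phiEven (α β : ℝ) (k : ℕ) : ℝ := cBarEven α β k / cBarBarEven α β k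

/-- The Jacobi weight `w_{(α,β)}(x) = (1-x)^α (1+x)^β`. -/
noncomputable def jacWeight (α β : ℝ) (x : ℝ) : ℝ := (1 - x) ^ α * (1 + x) ^ β

/-- The weighted inner product `⟨f,g⟩_{(α,β)}`. -/
noncomputable def jacInner (α β : ℝ) (f g : ℝ → ℝ) : ℝ :=
  ∫ x in (-1:ℝ)..1, f x * g x * jacWeight α β x

open Finset

lemma jacP_three_term_recurrence (γ δ : ℝ) (h : -2 < γ + δ) (x : ℝ) (k : ℕ) :
    (2*((k:ℝ)+1)+γ+δ) * (2*((k:ℝ)+1)+γ+δ+1) * (2*((k:ℝ)+1)+γ+δ+2) * x * jacP γ δ (k+1) x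
      = (δ-γ)*(γ+δ)*(2*((k:ℝ)+1)+γ+δ+1) * jacP γ δ (k+1) x
        + 2*(((k:ℝ)+1)+γ)*(((k:ℝ)+1)+δ)*(2*((k:ℝ)+1)+γ+δ+2) * jacP γ δ k x
        + 2*(((k:ℝ)+1)+1)*(((k:ℝ)+1)+1+γ+δ)*(2*((k:ℝ)+1)+γ+δ) * jacP γ δ (k+2) x := by
  have hk : (0:ℝ) ≤ k := Nat.cast_nonneg k
  have hd1 : 2*((k:ℝ)+1)+γ+δ ≠ 0 := by linarith
  have hd2 : 2*((k:ℝ)+1)+γ+δ+1 ≠ 0 := by linarith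
  have hd3 : 2*((k:ℝ)+1)+γ+δ+2 ≠ 0 := by linarith
  have hd4 : ((k:ℝ)+1)+1+γ+δ ≠ 0 := by linarith
  have hd5 : ((k:ℝ)+1)+1 ≠ 0 := by linarith
  simp only [jacP, jacA, jacB, jacC, if_neg (Nat.succ_ne_zero k)]
  push_cast
  field_simp
  ring

lemma jacP_contiguous_relations (α β : ℝ) (h : -2 < α + β) (x : ℝ) (n : ℕ) :
    (2*(n:ℝ)+α+β+2)*(1-x) * jacP (α+1) β n x
        = 2*((n:ℝ)+α+1) * jacP α β n x - 2*((n:ℝ)+1) * jacP α β (n+1) x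
    ∧ (2*(n:ℝ)+α+β+3) * jacP α β (n+1) x
        = ((n:ℝ)+α+β+2) * jacP (α+1) β (n+1) x - ((n:ℝ)+β+1) * jacP (α+1) β n x := by
  induction n with
  | zero =>
    have h2 : α + β + 2 ≠ 0 := by linarith
    have h3 : α + 1 + β + 2 ≠ 0 := by linarith
    simp only [jacP, jacA, jacC, Nat.cast_zero, ↓reduceIte]
    constructor <;> field_simp <;> ring
  | succ n ih =>
    obtain ⟨ihS, ihR⟩ := ih
    have hn : (0:ℝ) ≤ n := Nat.cast_nonneg n
    have recP := jacP_three_term_recurrence α β h x n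
    have recQ := jacP_three_term_recurrence (α+1) β (by linarith) x n
    have hS : (2*((n:ℝ)+1)+α+β+2)*(1-x) * jacP (α+1) β (n+1) x
        = 2*(((n:ℝ)+1)+α+1) * jacP α β (n+1) x - 2*(((n:ℝ)+1)+1) * jacP α β (n+2) x := by
      have hK : ((n:ℝ)+α+β+2)*(2*(n:ℝ)+α+β+2) ≠ 0 := by
        have : (0:ℝ) < (n:ℝ)+α+β+2 := by linarith
        have : (0:ℝ) < 2*(n:ℝ)+α+β+2 := by linarith
        positivity
      apply mul_left_cancel₀ hK
      linear_combination (((n:ℝ)+β+1)*(2*(n:ℝ)+α+β+4)) * ihS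
        - ((1-x)*(2*(n:ℝ)+α+β+2)*(2*(n:ℝ)+α+β+4)) * ihR - recP
    refine ⟨by push_cast; linear_combination hS, ?_⟩
    have hK : 2*((n:ℝ)+2)*(2*(n:ℝ)+α+β+3) ≠ 0 := by
      have : (0:ℝ) < 2*(n:ℝ)+α+β+3 := by linarith
      positivity
    push_cast
    apply mul_left_cancel₀ hK
    linear_combination (2*((n:ℝ)+α+2)*(2*(n:ℝ)+α+β+5)) * ihR
      + ((2*(n:ℝ)+α+β+3)*(2*(n:ℝ)+α+β+5)) * hS + recQ

section GammaRatios

variable (α β : ℝ) (n : ℕ)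

lemma cBarOdd_succ :
    cBarOdd α β (n+1)
      = (2*(n:ℝ)+α+β+3) * (Real.Gamma ((n:ℝ)+α+β+2) / Real.Gamma ((n:ℝ)+β+2)) := by
  simp only [cBarOdd, Nat.succ_ne_zero, ↓reduceIte]
  push_cast
  ring_nf

lemma cBarBarEven_succ (h : -2 < α + β) :
    cBarBarEven α β (n+1)
      = ((n:ℝ)+α+β+2) * (Real.Gamma ((n:ℝ)+α+β+2) / Real.Gamma ((n:ℝ)+β+2)) := by
  have hpos : (0:ℝ) < (n:ℝ)+α+β+2 := by linarith [(Nat.cast_nonneg n : (0:ℝ) ≤ n)]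
  rw [cBarBarEven, Nat.cast_succ, show (n:ℝ)+1+α+β+2 = ((n:ℝ)+α+β+2)+1 by ring,
    Real.Gamma_add_one hpos.ne', show (n:ℝ)+1+β+1 = (n:ℝ)+β+2 by ring, mul_div_assoc]

lemma cBarBarEven_eq (hβ : -1 < β) :
    cBarBarEven α β n
      = ((n:ℝ)+β+1) * (Real.Gamma ((n:ℝ)+α+β+2) / Real.Gamma ((n:ℝ)+β+2)) := by
  have hpos : (0:ℝ) < (n:ℝ)+β+1 := by linarith [(Nat.cast_nonneg n : (0:ℝ) ≤ n)]
  rw [cBarBarEven, show (n:ℝ)+β+2 = ((n:ℝ)+β+1)+1 by ring, Real.Gamma_add_one hpos.ne',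
    mul_div_assoc', mul_div_mul_left _ _ hpos.ne']

end GammaRatios

lemma cBarOdd_succ_mul_jacP_succ (α β : ℝ) (hβ : -1 < β) (h : -2 < α + β) (x : ℝ) (n : ℕ) :
    cBarOdd α β (n+1) * jacP α β (n+1) x
      = cBarBarEven α β (n+1) * jacP (α+1) β (n+1) x - cBarBarEven α β n * jacP (α+1) β n x := by
  rw [cBarOdd_succ, cBarBarEven_succ α β n h, cBarBarEven_eq α β n hβ]
  linear_combination (Real.Gamma ((n:ℝ)+α+β+2) / Real.Gamma ((n:ℝ)+β+2))
    * (jacP_contiguous_relations α β h x n).2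

/-- For all real α, β > −1, every natural number s, and every real x:
Σ_{r=0}^{s} c̄ᵒ_r · P^{(α,β)}_r(x) = c̿ᵉ_s · P^{(α+1,β)}_s(x). -/
theorem stmt0 (α β : ℝ) (hα : -1 < α) (hβ : -1 < β) (s : ℕ) (x : ℝ) :
    ∑ r ∈ Finset.range (s+1), cBarOdd α β r * jacP α β r x
      = cBarBarEven α β s * jacP (α+1) β s x := by
  set f : ℕ → ℝ := fun n ↦ cBarBarEven α β n * jacP (α+1) β n x
  have h0 : cBarOdd α β 0 * jacP α β 0 x = f 0 := by simp [f, cBarOdd, cBarBarEven, jacP]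
  have hstep (n : ℕ) : cBarOdd α β (n+1) * jacP α β (n+1) x = f (n+1) - f n :=
    cBarOdd_succ_mul_jacP_succ α β hβ (by linarith) x n
  rw [sum_range_succ', h0]
  simp only [hstep]
  rw [sum_range_sub, sub_add_cancel]
end

section
/- For all real α, β > −1, every natural number r, and every real x: (x − 1) · c̄ᵉ_r · P^{(α+1,β)}_r(x) = c̿ᵒ_{r+1} · P^{(α,β)}_{r+1}(x) − c̿ᵒ_r · P^{(α,β)}_r(x). -/
open Real MeasureTheory

/-!
Clearing the Gamma factors, the identity becomes the contiguous relation
`(x - 1)(2r+α+β+2) P^{(α+1,β)}_r = 2((r+1) P^{(α,β)}_{r+1} - (α+r+1) P^{(α,β)}_r)`.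
It is proved by induction on `r` together with the companion relation
`(2r+α+β+3) P^{(α,β)}_{r+1} = (r+α+β+2) P^{(α+1,β)}_{r+1} - (r+β+1) P^{(α+1,β)}_r`:
each relation at the next degree is a linear combination of the two relations at lower degree
and the three-term recurrences for `(α,β)` and `(α+1,β)`.
-/

lemma jacA_succ (α β : ℝ) (k : ℕ) :
    jacA α β (k + 1) = (β - α) * (α + β) / ((2 * k + α + β + 2) * (2 * k + α + β + 4)) := by
  rw [jacA, if_neg k.succ_ne_zero]
  push_cast
  ring_nf

lemma jacB_succ (α β : ℝ) (k : ℕ) :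
    jacB α β (k + 1) =
      2 * (k + 1 + α) * (k + 1 + β) / ((2 * k + α + β + 2) * (2 * k + α + β + 3)) := by
  rw [jacB]
  push_cast
  ring_nf

lemma jacC_succ (α β : ℝ) (k : ℕ) :
    jacC α β (k + 1) = 2 * (k + 2) * (k + 2 + α + β) / ((2 * k + α + β + 3) * (2 * k + α + β + 4)) := by
  rw [jacC, if_neg k.succ_ne_zero]
  push_cast
  ring_nf

@[simp]
lemma jacP_zero (α β x : ℝ) : jacP α β 0 x = 1 := rfl

lemma jacP_one (α β x : ℝ) (hαβ : α + β + 2 ≠ 0) :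
    2 * jacP α β 1 x = (α + β + 2) * x + α - β := by
  change 2 * ((x - (β - α) / (α + β + 2)) / (2 / (α + β + 2))) = _
  field_simp
  ring

section Recurrence

variable {α β : ℝ}

lemma jacP_add_two (hαβ : -2 < α + β) (k : ℕ) (x : ℝ) :
    (2 * k + α + β + 2) * (2 * (k + 2) * (k + 2 + α + β)) * jacP α β (k + 2) x
      = (2 * k + α + β + 2) * (2 * k + α + β + 3) * (2 * k + α + β + 4) * (x * jacP α β (k + 1) x)
        - (β - α) * (α + β) * (2 * k + α + β + 3) * jacP α β (k + 1) x
        - 2 * (k + 1 + α) * (k + 1 + β) * (2 * k + α + β + 4) * jacP α β k x := by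
  have hk : (0 : ℝ) ≤ k := k.cast_nonneg
  have h2 : (2 * k + α + β + 2 : ℝ) ≠ 0 := by linarith
  have h3 : (2 * k + α + β + 3 : ℝ) ≠ 0 := by linarith
  have h4 : (2 * k + α + β + 4 : ℝ) ≠ 0 := by linarith
  have h5 : (k + 2 : ℝ) ≠ 0 := by linarith
  have h6 : (k + 2 + α + β : ℝ) ≠ 0 := by linarith
  rw [jacP, jacA_succ, jacB_succ, jacC_succ]
  field_simp

lemma sub_one_mul_jacP_alpha_succ_succ (hαβ : -2 < α + β) (r : ℕ) (x : ℝ)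
    (h₁ : (x - 1) * (2 * r + α + β + 2) * jacP (α + 1) β r x
      = 2 * ((r + 1) * jacP α β (r + 1) x - (α + r + 1) * jacP α β r x))
    (h₂ : (2 * r + α + β + 3) * jacP α β (r + 1) x
      = (r + α + β + 2) * jacP (α + 1) β (r + 1) x - (r + 1 + β) * jacP (α + 1) β r x) :
    (x - 1) * (2 * r + α + β + 4) * jacP (α + 1) β (r + 1) x
      = 2 * ((r + 2) * jacP α β (r + 2) x - (α + r + 2) * jacP α β (r + 1) x) := by
  have hr : (0 : ℝ) ≤ r := r.cast_nonneg
  have hne : (r + α + β + 2) * (2 * r + α + β + 2) ≠ 0 := mul_ne_zero (by linarith) (by linarith)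
  refine mul_left_cancel₀ hne ?_
  linear_combination (-(2 * r + α + β + 2) * (x - 1) * (2 * r + α + β + 4)) * h₂
    + ((r + 1 + β) * (2 * r + α + β + 4)) * h₁ - jacP_add_two hαβ r x

lemma jacP_succ_succ_eq (hαβ : -2 < α + β) (r : ℕ) (x : ℝ)
    (h₁ : (x - 1) * (2 * r + α + β + 4) * jacP (α + 1) β (r + 1) x
      = 2 * ((r + 2) * jacP α β (r + 2) x - (α + r + 2) * jacP α β (r + 1) x))
    (h₂ : (2 * r + α + β + 3) * jacP α β (r + 1) x
      = (r + α + β + 2) * jacP (α + 1) β (r + 1) x - (r + 1 + β) * jacP (α + 1) β r x) :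
    (2 * r + α + β + 5) * jacP α β (r + 2) x
      = (r + α + β + 3) * jacP (α + 1) β (r + 2) x - (r + 2 + β) * jacP (α + 1) β (r + 1) x := by
  have hr : (0 : ℝ) ≤ r := r.cast_nonneg
  have hne : 2 * (r + 2) * (2 * r + α + β + 3) ≠ 0 :=
    mul_ne_zero (mul_ne_zero two_ne_zero (by linarith)) (by linarith)
  refine mul_left_cancel₀ hne ?_
  have hrec := jacP_add_two (α := α + 1) (β := β) (by linarith) r x
  linear_combination -hrec - ((2 * r + α + β + 3) * (2 * r + α + β + 5)) * h₁
    + (2 * (2 * r + α + β + 5) * (r + α + 2)) * h₂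

lemma jacP_contiguous (hαβ : -2 < α + β) (x : ℝ) (r : ℕ) :
    (x - 1) * (2 * r + α + β + 2) * jacP (α + 1) β r x
        = 2 * ((r + 1) * jacP α β (r + 1) x - (α + r + 1) * jacP α β r x) ∧
      (2 * r + α + β + 3) * jacP α β (r + 1) x
        = (r + α + β + 2) * jacP (α + 1) β (r + 1) x - (r + 1 + β) * jacP (α + 1) β r x := by
  induction r with
  | zero =>
    have h := jacP_one α β x (by linarith)
    have h' := jacP_one (α + 1) β x (by linarith)
    simp only [Nat.cast_zero, zero_add, jacP_zero, mul_one]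
    constructor
    · linear_combination -h
    · refine mul_left_cancel₀ (two_ne_zero (α := ℝ)) ?_
      linear_combination (α + β + 3) * h - (α + β + 2) * h'
  | succ r ih =>
    have h₁ := sub_one_mul_jacP_alpha_succ_succ hαβ r x ih.1 ih.2
    push_cast
    exact ⟨by linear_combination h₁,
      by linear_combination jacP_succ_succ_eq hαβ r x h₁ ih.2⟩

end Recurrence

lemma cBarBarOdd_succ {α : ℝ} {k : ℕ} (h : α + k + 1 ≠ 0) :
    cBarBarOdd α (k + 1) = (k + 1) / (α + k + 1) * cBarBarOdd α k := by
  have hΓ : Gamma (α + k + 2) = (α + k + 1) * Gamma (α + k + 1) := by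
    rw [← Gamma_add_one h, add_assoc _ 1 1, one_add_one_eq_two]
  rw [cBarBarOdd, cBarBarOdd, Nat.cast_succ, Gamma_add_one (by positivity),
    show α + (k + 1 : ℝ) + 1 = α + k + 2 by ring, hΓ]
  field_simp

lemma cBarEven_eq {α : ℝ} (β : ℝ) {k : ℕ} (h : α + k + 1 ≠ 0) :
    cBarEven α β k = (2 * k + α + β + 2) / (2 * (α + k + 1)) * cBarBarOdd α k := by
  have hΓ : Gamma (α + k + 2) = (α + k + 1) * Gamma (α + k + 1) := by
    rw [← Gamma_add_one h, add_assoc _ 1 1, one_add_one_eq_two]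
  rw [cBarEven, cBarBarOdd, hΓ]
  field_simp

/-- For all real α, β > −1, every natural number r, and every real x:
(x − 1) · c̄ᵉ_r · P^{(α+1,β)}_r(x) = c̿ᵒ_{r+1}·P^{(α,β)}_{r+1}(x) − c̿ᵒ_r·P^{(α,β)}_r(x). -/
theorem stmt2 (α β : ℝ) (hα : -1 < α) (hβ : -1 < β) (r : ℕ) (x : ℝ) :
    (x - 1) * (cBarEven α β r * jacP (α+1) β r x)
      = cBarBarOdd α (r+1) * jacP α β (r+1) x - cBarBarOdd α r * jacP α β r x := by
  have hr : α + r + 1 ≠ 0 := by have := r.cast_nonneg (α := ℝ); linarith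
  have hcontig := (jacP_contiguous (α := α) (β := β) (by linarith) x r).1
  rw [cBarEven_eq β hr, cBarBarOdd_succ hr]
  field_simp
  linear_combination cBarBarOdd α r * hcontig
end

section
/- Let α, β > −1. For every natural number s and every real x: (x − 1) · c̿ᵉ_s · P^{(α+1,β)}_s(x) = [2·Γ(α+1)·Γ(s+2)·Γ(s+α+β+2) / ((2s+α+β+2)·Γ(s+α+1)·Γ(s+β+1))] · (P^{(α,β)}_{s+1}(x)·P^{(α,β)}_s(1) − P^{(α,β)}_s(x)·P^{(α,β)}_{s+1}(1)). -/
open Real MeasureTheory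

/-!
The connection formula
`(2n+α+β+2) (x-1) P^{(α+1,β)}_n(x) = 2(n+1) P^{(α,β)}_{n+1}(x) - 2(n+α+1) P^{(α,β)}_n(x)`
follows from the three-term recurrences by a two-step induction. At `x = 1` it gives
`(n+1) P^{(α,β)}_{n+1}(1) = (n+α+1) P^{(α,β)}_n(1)`, hence
`P^{(α,β)}_n(1) = Γ(n+α+1) / (Γ(α+1) Γ(n+1))`. With this ratio the bracket
`P_{s+1}(x) P_s(1) - P_s(x) P_{s+1}(1)` becomes `P_s(1) / (s+1)` times the right side of the
connection formula, and the Gamma factors cancel against `c̿ᵉ_s`.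
-/

section Jacobi

variable {α β : ℝ}

theorem jacP_recurrence (hab : 0 < α + β + 2) (k : ℕ) (x : ℝ) :
    (2*(k:ℝ)+α+β+2) * (2*(k:ℝ)+α+β+3) * (2*(k:ℝ)+α+β+4) * (x * jacP α β (k+1) x)
      = (β-α)*(α+β)*(2*(k:ℝ)+α+β+3) * jacP α β (k+1) x
        + 2*((k:ℝ)+1+α)*((k:ℝ)+1+β)*(2*(k:ℝ)+α+β+4) * jacP α β k x
        + 2*((k:ℝ)+2)*((k:ℝ)+2+α+β)*(2*(k:ℝ)+α+β+2) * jacP α β (k+2) x := by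
  have hk : (0:ℝ) ≤ k := k.cast_nonneg
  have h₁ : 2*((k:ℝ)+1)+α+β ≠ 0 := by linarith
  have h₂ : 2*((k:ℝ)+1)+α+β+1 ≠ 0 := by linarith
  have h₃ : 2*((k:ℝ)+1)+α+β+2 ≠ 0 := by linarith
  have h₄ : (k:ℝ)+1+1 ≠ 0 := by linarith
  have h₅ : (k:ℝ)+1+1+α+β ≠ 0 := by linarith
  simp only [jacP, jacA, jacB, jacC, if_neg k.succ_ne_zero]
  push_cast
  field_simp
  ring

theorem sub_one_mul_jacP_add_one_left (hab : 0 < α + β + 2) (n : ℕ) (x : ℝ) :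
    (2*(n:ℝ)+α+β+2) * ((x-1) * jacP (α+1) β n x)
      = 2*((n:ℝ)+1) * jacP α β (n+1) x - 2*((n:ℝ)+α+1) * jacP α β n x := by
  have h₀ : α+β+2 ≠ 0 := hab.ne'
  induction n using Nat.twoStepInduction with
  | zero =>
    simp only [jacP, jacA, jacC, ↓reduceIte, Nat.cast_zero]
    field_simp
    ring
  | one =>
    have h₁ : α+β+3 ≠ 0 := by linarith
    have h₂ : α+1+β+2 ≠ 0 := by linarith
    have h₃ : 2+α+β ≠ 0 := by linarith
    have h₄ : 2+α+β+1 ≠ 0 := by linarith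
    have h₅ : 2+α+β+2 ≠ 0 := by linarith
    simp only [jacP, jacA, jacB, jacC, ↓reduceIte]
    norm_num
    field_simp
    ring
  | more n ih₁ ih₂ =>
    have hn : (0:ℝ) ≤ n := n.cast_nonneg
    have R₁ := jacP_recurrence hab n x
    have R₂ := jacP_recurrence hab (n+1) x
    have S := jacP_recurrence (α := α+1) (β := β) (by linarith) n x
    push_cast at R₂ ih₂ ⊢
    have hK : 2*((n:ℝ)+2) * ((n:ℝ)+α+β+3) * (2*(n:ℝ)+α+β+3) * (2*(n:ℝ)+α+β+2)
        * (2*(n:ℝ)+α+β+4) ≠ 0 := by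
      have : 0 < 2*((n:ℝ)+2) * ((n:ℝ)+α+β+3) * (2*(n:ℝ)+α+β+3) * (2*(n:ℝ)+α+β+2)
          * (2*(n:ℝ)+α+β+4) := by
        apply_rules [mul_pos] <;> linarith
      exact this.ne'
    refine mul_left_cancel₀ hK ?_
    -- Multiply the recurrence for `P^{(α+1,β)}` by `x - 1`, replace `(x-1) P^{(α+1,β)}_n` and
    -- `(x-1) P^{(α+1,β)}_{n+1}` by the induction hypotheses, and remove `x P^{(α,β)}_{n+2}` and
    -- `x P^{(α,β)}_{n+1}` with the recurrence for `P^{(α,β)}`.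
    linear_combination
      (-((2*(n:ℝ)+α+β+6) * (2*(n:ℝ)+α+β+2) * (2*(n:ℝ)+α+β+4) * (x-1))) * S
      + ((2*(n:ℝ)+α+β+6) * (2*(n:ℝ)+α+β+2)
          * ((2*(n:ℝ)+α+β+3)*(2*(n:ℝ)+α+β+4)*(2*(n:ℝ)+α+β+5)*x
              - (β-α-1)*(α+β+1)*(2*(n:ℝ)+α+β+4))) * ih₂
      + (-((2*(n:ℝ)+α+β+6) * (2*(n:ℝ)+α+β+4) * 2*((n:ℝ)+α+2)*((n:ℝ)+β+1)
          * (2*(n:ℝ)+α+β+5))) * ih₁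
      + (2*((n:ℝ)+2) * (2*(n:ℝ)+α+β+2) * (2*(n:ℝ)+α+β+3)) * R₂
      + (-(2*((n:ℝ)+α+2) * (2*(n:ℝ)+α+β+5) * (2*(n:ℝ)+α+β+6))) * R₁

theorem succ_mul_jacP_succ_one (hab : 0 < α + β + 2) (n : ℕ) :
    ((n:ℝ)+1) * jacP α β (n+1) 1 = ((n:ℝ)+α+1) * jacP α β n 1 := by
  linarith [sub_one_mul_jacP_add_one_left hab n 1]

theorem jacP_one_s9 (hα : -1 < α) (hab : 0 < α + β + 2) (n : ℕ) :
    jacP α β n 1 = Gamma ((n:ℝ)+α+1) / (Gamma (α+1) * Gamma ((n:ℝ)+1)) := by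
  induction n with
  | zero =>
    simp [jacP, (Gamma_pos_of_pos (by linarith : 0 < α+1)).ne']
  | succ n ih =>
    have hn : (0:ℝ) ≤ n := n.cast_nonneg
    have hn₁ : (n:ℝ)+1 ≠ 0 := by linarith
    push_cast
    rw [← mul_right_inj' hn₁, succ_mul_jacP_succ_one hab, ih,
      show (n:ℝ)+1+α+1 = ((n:ℝ)+α+1)+1 by ring, Gamma_add_one (s := (n:ℝ)+α+1) (by linarith),
      Gamma_add_one hn₁]
    field_simp

end Jacobi

/-- the Christoffel--Darboux type identity
(x−1)·c̿ᵉ_s·P^{(α+1,β)}_s(x) = [2Γ(α+1)Γ(s+2)Γ(s+α+β+2)/((2s+α+β+2)Γ(s+α+1)Γ(s+β+1))]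
  ·(P^{(α,β)}_{s+1}(x)P^{(α,β)}_s(1) − P^{(α,β)}_s(x)P^{(α,β)}_{s+1}(1)). -/
theorem stmt9 (α β : ℝ) (hα : -1 < α) (hβ : -1 < β) (s : ℕ) (x : ℝ) :
    (x - 1) * (cBarBarEven α β s * jacP (α+1) β s x)
      = (2 * Real.Gamma (α+1) * Real.Gamma ((s:ℝ)+2) * Real.Gamma ((s:ℝ)+α+β+2) /
          ((2*(s:ℝ)+α+β+2) * Real.Gamma ((s:ℝ)+α+1) * Real.Gamma ((s:ℝ)+β+1))) *
        (jacP α β (s+1) x * jacP α β s 1 - jacP α β s x * jacP α β (s+1) 1) := by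
  have hab : 0 < α + β + 2 := by linarith
  have hs : (0:ℝ) ≤ s := s.cast_nonneg
  have hs₁ : (s:ℝ) + 1 ≠ 0 := by linarith
  have hwronskian : jacP α β (s+1) x * jacP α β s 1 - jacP α β s x * jacP α β (s+1) 1
      = jacP α β s 1 * ((2*(s:ℝ)+α+β+2) * ((x-1) * jacP (α+1) β s x)) / (2*((s:ℝ)+1)) := by
    have hone := succ_mul_jacP_succ_one hab s
    rw [sub_one_mul_jacP_add_one_left hab s x]
    field_simp
    linear_combination -jacP α β s x * hone
  have hΓ₁ := (Gamma_pos_of_pos (by linarith : 0 < α+1)).ne'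
  have hΓ₂ := (Gamma_pos_of_pos (by linarith : 0 < (s:ℝ)+α+1)).ne'
  have hΓ₃ := (Gamma_pos_of_pos (by linarith : 0 < (s:ℝ)+β+1)).ne'
  have hΓ₄ := (Gamma_pos_of_pos (by linarith : 0 < (s:ℝ)+1)).ne'
  rw [hwronskian, jacP_one_s9 hα hab, cBarBarEven, show (s:ℝ)+2 = (s:ℝ)+1+1 by ring,
    Gamma_add_one hs₁]
  have hd : (s:ℝ)*2+α+β+2 ≠ 0 := by linarith
  field_simp
end

section
/- Let n ≥ 1, and for each natural number k let f_k, g_k : ℂ → ℂ. Let w_1, …, w_n and z_1, …, z_n be complex numbers such that for all 1 ≤ i, j ≤ n the series Σ_{k=0}^{∞} |f_k(w_i)|·|g_k(z_j)| converges. Then the family, indexed by strictly decreasing tuples k_1 > k_2 > … > k_n ≥ 0 of natural numbers, of complex numbers det[ f_{k_j}(w_i) ]_{i,j=1}^{n} · det[ g_{k_i}(z_j) ]_{i,j=1}^{n} is summable, and its sum equals det[ Σ_{k=0}^{∞} f_k(w_i)·g_k(z_j) ]_{i,j=1}^{n}. -/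
open Real MeasureTheory

/-
Expanding `det [∑' k, f k (w i) * g k (z j)]` multilinearly gives an absolutely convergent
sum over all tuples `k : Fin n → ℕ` of `(∏ i, g (k i) (z i)) * det [f (k j) (w i)]`.
The terms with repeated entries vanish, every injective tuple is uniquely a strictly
decreasing tuple composed with a permutation, and summing over the permutations in each
fibre is the finite Cauchy–Binet identity.
-/

section TupleProduct

variable {R β : Type*} [NormedCommRing R]

theorem Fin.prod_consEquiv_apply {n : ℕ} (a : Fin (n + 1) → β → R) (p : β × (Fin n → β)) :
    ∏ i, a i (Fin.consEquiv (fun _ => β) p i) = a 0 p.1 * ∏ i, a i.succ (p.2 i) := by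
  simp [Fin.prod_univ_succ]

theorem summable_norm_prod_apply {n : ℕ} (a : Fin n → β → R)
    (ha : ∀ i, Summable fun b => ‖a i b‖) :
    Summable fun k : Fin n → β => ‖∏ i, a i (k i)‖ := by
  induction n with
  | zero => exact Summable.of_finite
  | succ n ih =>
    rw [← (Fin.consEquiv fun _ => β).summable_iff]
    simpa only [Function.comp_def, Fin.prod_consEquiv_apply] using
      (ha 0).mul_norm (ih (fun i => a i.succ) fun i => ha i.succ)

theorem hasSum_prod_apply [CompleteSpace R] {n : ℕ} (a : Fin n → β → R)
    (ha : ∀ i, Summable fun b => ‖a i b‖) :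
    HasSum (fun k : Fin n → β => ∏ i, a i (k i)) (∏ i, ∑' b, a i b) := by
  induction n with
  | zero => simp
  | succ n ih =>
    have hprod := summable_mul_of_summable_norm (ha 0)
      (summable_norm_prod_apply (fun i => a i.succ) fun i => ha i.succ)
    have h := (ha 0).of_norm.hasSum.mul (ih (fun i => a i.succ) fun i => ha i.succ) hprod
    rw [← (Fin.consEquiv fun _ => β).hasSum_iff, Fin.prod_univ_succ]
    simp only [Function.comp_def, Fin.prod_consEquiv_apply]
    exact h

end TupleProduct

section CauchyBinet

open Matrix Equiv

variable {R β : Type*} {n : ℕ}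

theorem hasSum_prod_mul_det_of_summable_norm [NormedCommRing R] [CompleteSpace R]
    (A : Fin n → β → R) (B : β → Fin n → R) (hAB : ∀ i j, Summable fun k => ‖A i k * B k j‖) :
    HasSum (fun k : Fin n → β => (∏ i, B (k i) i) * (of fun i j => A i (k j)).det)
      (of fun i j => ∑' k, A i k * B k j).det := by
  have hterm (σ : Perm (Fin n)) :
      HasSum (fun k : Fin n → β => Perm.sign σ • ∏ i, A (σ i) (k i) * B (k i) i)
        (Perm.sign σ • ∏ i, ∑' k, A (σ i) k * B k i) :=
    (hasSum_prod_apply (fun i k => A (σ i) k * B k i) fun i => hAB (σ i) i).const_smul _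
  convert hasSum_sum fun σ (_ : σ ∈ Finset.univ) => hterm σ using 1
  · funext k
    simp only [det_apply, of_apply, Finset.mul_sum, Finset.prod_mul_distrib, mul_smul_comm,
      mul_comm]
  · simp only [det_apply, of_apply]

theorem det_of_apply_comp_eq_zero [CommRing R] (A : Fin n → β → R) {k : Fin n → β}
    (hk : ¬ Function.Injective k) : (of fun i j => A i (k j)).det = 0 := by
  obtain ⟨i, j, hkij, hij⟩ := Function.not_injective_iff.mp hk
  exact det_zero_of_column_eq hij fun r => by simp only [of_apply, hkij]

theorem hasSum_injective_prod_mul_det_of_summable_norm [NormedCommRing R] [CompleteSpace R]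
    (A : Fin n → β → R) (B : β → Fin n → R) (hAB : ∀ i j, Summable fun k => ‖A i k * B k j‖) :
    HasSum (fun k : {k : Fin n → β // Function.Injective k} =>
        (∏ i, B (k.1 i) i) * (of fun i j => A i (k.1 j)).det)
      (of fun i j => ∑' k, A i k * B k j).det := by
  have hall := hasSum_prod_mul_det_of_summable_norm A B hAB
  rw [← Subtype.val_injective.hasSum_iff] at hall
  · exact hall
  · intro k hk
    rw [det_of_apply_comp_eq_zero A fun hinj => hk ⟨⟨k, hinj⟩, rfl⟩, mul_zero]

theorem sum_perm_prod_mul_det_comp [CommRing R] (A : Fin n → β → R) (B : β → Fin n → R)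
    (k : Fin n → β) :
    ∑ σ : Perm (Fin n), (∏ i, B (k (σ i)) i) * (of fun i j => A i (k (σ j))).det =
      (of fun i j => A i (k j)).det * (of fun i j => B (k i) j).det := by
  have hperm (σ : Perm (Fin n)) : (of fun i j => A i (k (σ j))).det =
      Perm.sign σ * (of fun i j => A i (k j)).det :=
    det_permute' σ (of fun i j => A i (k j))
  rw [det_apply' (of fun i j => B (k i) j), Finset.mul_sum]
  refine Finset.sum_congr rfl fun σ _ => ?_
  simp only [hperm, of_apply]
  ring

end CauchyBinet

section SortedTuples

variable {β : Type*} [LinearOrder β] {n : ℕ}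

theorem bijective_strictAnti_comp_perm :
    Function.Bijective fun p : {k : Fin n → β // StrictAnti k} × Equiv.Perm (Fin n) =>
      (⟨p.1.1 ∘ p.2, p.1.2.injective.comp p.2.injective⟩ :
        {k : Fin n → β // Function.Injective k}) := by
  constructor
  · rintro ⟨⟨k, hk⟩, σ⟩ ⟨⟨k', hk'⟩, σ'⟩ h
    have hcomp : k ∘ σ = k' ∘ σ' := congrArg Subtype.val h
    obtain rfl : k = k' := (hk.range_inj hk').mp <| by
      rw [← σ.surjective.range_comp k, ← σ'.surjective.range_comp k', hcomp]
    obtain rfl : σ = σ' := Equiv.ext fun i => hk.injective (congrFun hcomp i)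
    rfl
  · rintro ⟨k, hk⟩
    -- sorting `k` increasingly and reversing gives the strictly decreasing representative
    set σ := Tuple.sort k
    have hsorted : StrictMono (k ∘ σ) :=
      (Tuple.monotone_sort k).strictMono_of_injective (hk.comp σ.injective)
    refine ⟨⟨⟨k ∘ σ ∘ Fin.rev, hsorted.comp_strictAnti Fin.rev_strictAnti⟩,
      σ.symm.trans Fin.revPerm⟩, Subtype.ext ?_⟩
    funext i
    simp

end SortedTuples

theorem stmt13_general (n : ℕ) (f g : ℕ → ℂ → ℂ) (w z : Fin n → ℂ)
    (habs : ∀ i j : Fin n,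
      Summable (fun k : ℕ => ‖f k (w i)‖ * ‖g k (z j)‖)) :
    HasSum (fun kt : {k : Fin n → ℕ // StrictAnti k} =>
      Matrix.det (Matrix.of fun i j : Fin n => f (kt.1 j) (w i)) *
      Matrix.det (Matrix.of fun i j : Fin n => g (kt.1 i) (z j)))
      (Matrix.det (Matrix.of fun i j : Fin n => ∑' k : ℕ, f k (w i) * g k (z j))) := by
  have hfg : ∀ i j, Summable fun k => ‖f k (w i) * g k (z j)‖ := by
    simpa only [norm_mul] using habs
  have hinj := hasSum_injective_prod_mul_det_of_summable_norm
    (fun i k => f k (w i)) (fun k j => g k (z j)) hfg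
  rw [← (Equiv.ofBijective _ bijective_strictAnti_comp_perm).hasSum_iff] at hinj
  refine hinj.prod_fiberwise fun kt => ?_
  convert hasSum_fintype _ using 1
  exact (sum_perm_prod_mul_det_comp (fun i k => f k (w i)) (fun k j => g k (z j)) kt.1).symm

/-- a variant of the Cauchy–Binet formula: summing products of
determinants over strictly decreasing tuples k₁ > … > kₙ ≥ 0. -/
theorem stmt13 (n : ℕ) (hn : 1 ≤ n) (f g : ℕ → ℂ → ℂ) (w z : Fin n → ℂ)
    (habs : ∀ i j : Fin n,
      Summable (fun k : ℕ => ‖f k (w i)‖ * ‖g k (z j)‖)) :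
    HasSum (fun kt : {k : Fin n → ℕ // StrictAnti k} =>
      Matrix.det (Matrix.of fun i j : Fin n => f (kt.1 j) (w i)) *
      Matrix.det (Matrix.of fun i j : Fin n => g (kt.1 i) (z j)))
      (Matrix.det (Matrix.of fun i j : Fin n => ∑' k : ℕ, f k (w i) * g k (z j))) :=
  stmt13_general n f g w z habs
end

section
/- Let p ≥ 1. (i) (Strict case.) Let λ be a partition with at most p parts and μ a partition with at most p+1 parts; set λ̃_i := λ_i + p − i for 1 ≤ i ≤ p, λ̃_{p+1} := −1, and μ̃_j := μ_j + p + 1 − j for 1 ≤ j ≤ p+1. Then det[ 1_{λ̃_i < μ̃_j} ]_{i,j=1}^{p+1} equals 1 if μ_1 ≥ λ_1 ≥ μ_2 ≥ λ_2 ≥ … ≥ μ_p ≥ λ_p ≥ μ_{p+1}, and equals 0 otherwise. (ii) (Weak case.) Let λ and μ both be partitions with at most p parts; set λ̃_i := λ_i + p − i and μ̃_j := μ_j + p − j. Then det[ 1_{λ̃_i ≤ μ̃_j} ]_{i,j=1}^{p} equals 1 if μ_1 ≥ λ_1 ≥ μ_2 ≥ λ_2 ≥ … ≥ μ_p ≥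 λ_p, and equals 0 otherwise. -/
open Real MeasureTheory

/-! Since `b` is antitone, row `i` of the matrix `[a i < b j]` is the indicator of an initial
segment `{j | j < t i}` of the columns, and `t` is monotone because `a` is antitone. Such a
staircase matrix is unitriangular when `t i = i + 1` for every `i`, which is exactly interlacing;
otherwise two rows coincide, or `t` is strictly monotone with values in `[0, n]`, and then
`t 0 = 0` gives a zero row. Both determinants of the theorem are of this form, the weak one
via `x ≤ y ↔ x < y + 1`. -/

namespace Fin

open Finset in
theorem val_lt_card_filter_iff {n : ℕ} {P : Fin n → Prop} [DecidablePred P] (hP : Antitone P)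
    (j : Fin n) : P j ↔ (j : ℕ) < #{k | P k} := by
  constructor
  · intro hj
    have hsub : Iic j ⊆ ({k | P k} : Finset (Fin n)) := fun k hk =>
      mem_filter.2 ⟨mem_univ k, hP (mem_Iic.1 hk) hj⟩
    simpa using card_le_card hsub
  · intro hj
    by_contra hPj
    have hsub : ({k | P k} : Finset (Fin n)) ⊆ Iio j := fun k hk =>
      mem_Iio.2 (lt_of_not_ge fun hjk => hPj (hP hjk (mem_filter.1 hk).2))
    have := card_le_card hsub
    rw [Fin.card_Iio] at this
    omega

theorem eq_val_add_one_of_strictMono {n : ℕ} {t : Fin n → ℕ} (ht : StrictMono t)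
    (hpos : ∀ i, 0 < t i) (hle : ∀ i, t i ≤ n) (i : Fin n) : t i = i + 1 := by
  let f : Fin n → Fin n := fun i => ⟨t i - 1, by have := hpos i; have := hle i; omega⟩
  have hf : StrictMono f := fun i j hij => by
    have := ht hij
    have := hpos i
    simp only [f, Fin.mk_lt_mk]
    omega
  have : t i - 1 = i := congrArg Fin.val (hf.apply_eq (x := i))
  have := hpos i
  omega

end Fin

namespace Matrix

variable {R : Type*} [CommRing R] {n : ℕ}

theorem det_of_ite_le : (of fun i j : Fin n => if j ≤ i then (1 : R) else 0).det = 1 := by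
  rw [det_of_isLowerTriangular]
  · simp
  · intro i j hij
    simp [not_le.2 (OrderDual.toDual_lt_toDual.1 hij)]

theorem det_of_ite_val_lt {t : Fin n → ℕ} (ht : Monotone t) (hle : ∀ i, t i ≤ n) :
    (of fun i j : Fin n => if (j : ℕ) < t i then (1 : R) else 0).det =
      if ∀ i, t i = i + 1 then 1 else 0 := by
  by_cases hdiag : ∀ i, t i = i + 1
  · rw [if_pos hdiag]
    simp only [hdiag, Nat.lt_succ_iff, ← Fin.le_def]
    exact det_of_ite_le
  rw [if_neg hdiag]
  by_cases hinj : Function.Injective t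
  · obtain ⟨i, hi⟩ : ∃ i, t i = 0 := by
      by_contra! hpos
      exact hdiag (Fin.eq_val_add_one_of_strictMono (ht.strictMono_of_injective hinj)
        (fun i => Nat.pos_of_ne_zero (hpos i)) hle)
    exact det_eq_zero_of_row_eq_zero i fun j => by simp [hi]
  · obtain ⟨i, j, hij, hne⟩ := Function.not_injective_iff.1 hinj
    exact det_zero_of_row_eq hne (by ext k; simp [hij])

open Finset in
theorem det_of_ite_lt_of_antitone {α : Type*} [LinearOrder α] {a b : Fin n → α} (ha : Antitone a)
    (hb : Antitone b) :
    (of fun i j : Fin n => if a i < b j then (1 : R) else 0).det =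
      if ∀ i : Fin n, a i < b i ∧ ∀ h : (i : ℕ) + 1 < n, b ⟨i + 1, h⟩ ≤ a i then 1 else 0 := by
  set t : Fin n → ℕ := fun i => #{j | a i < b j}
  have hrow (i j : Fin n) : a i < b j ↔ (j : ℕ) < t i :=
    Fin.val_lt_card_filter_iff (P := fun j => a i < b j)
      (fun _ _ hjk (hk : a i < _) => hk.trans_le (hb hjk)) j
  have ht : Monotone t := fun _ _ hii' =>
    card_le_card (monotone_filter_right _ fun _ _ => (ha hii').trans_lt)
  have hle (i : Fin n) : t i ≤ n := (card_filter_le _ _).trans_eq (card_fin n)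
  simp only [hrow, ← not_lt]
  rw [det_of_ite_val_lt ht hle]
  congr 1
  exact propext (forall_congr' fun i => by have := hle i; omega)

end Matrix

theorem det_of_ite_shifted_lt_eq_ite_interlaces {p : ℕ} {lam : Fin p → ℕ} (hlam : Antitone lam)
    {μ : Fin (p + 1) → ℕ} (hμ : Antitone μ) :
    Matrix.det (Matrix.of fun i j : Fin (p + 1) =>
      (if (if h : (i : ℕ) < p then ((lam ⟨i, h⟩ : ℤ) + ((p - 1 - i : ℕ) : ℤ)) else -1)
          < (μ j : ℤ) + ((p - j : ℕ) : ℤ) then (1 : ℝ) else 0))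
      = if ∀ i : Fin p, lam i ≤ μ i.castSucc ∧ μ i.succ ≤ lam i then 1 else 0 := by
  have ha : Antitone fun i : Fin (p + 1) => if h : (i : ℕ) < p
      then ((lam ⟨i, h⟩ : ℤ) + ((p - 1 - i : ℕ) : ℤ)) else -1 := fun i i' hii' => by
    have : (i : ℕ) ≤ i' := hii'
    dsimp only
    split_ifs with hi' hi
    · have := hlam (show (⟨i, hi⟩ : Fin p) ≤ ⟨i', hi'⟩ from hii')
      omega
    all_goals omega
  have hb : Antitone fun j : Fin (p + 1) => (μ j : ℤ) + ((p - j : ℕ) : ℤ) := fun j j' hjj' => by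
    have := hμ hjj'
    have : (j : ℕ) ≤ j' := hjj'
    dsimp only
    omega
  rw [Matrix.det_of_ite_lt_of_antitone ha hb]
  congr 1
  simp only [Fin.forall_fin_succ', Fin.val_castSucc, Fin.is_lt, Fin.val_last, lt_self_iff_false,
    ↓reduceDIte, Fin.eta, eq_iff_iff, add_lt_add_iff_right, forall_true_left, IsEmpty.forall_iff,
    and_true]
  refine and_iff_left_of_imp (fun _ => by omega) |>.trans (forall_congr' fun i => ?_)
  rw [show (⟨i + 1, by omega⟩ : Fin (p + 1)) = i.succ from rfl]
  omega

theorem det_of_ite_shifted_le_eq_ite_interlaces {p : ℕ} {lam μ : Fin p → ℕ} (hlam : Antitone lam)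
    (hμ : Antitone μ) :
    Matrix.det (Matrix.of fun i j : Fin p =>
      (if lam i + (p - 1 - i) ≤ μ j + (p - 1 - j) then (1 : ℝ) else 0))
      = if ∀ i : Fin p, lam i ≤ μ i ∧ ∀ h : (i : ℕ) + 1 < p, μ ⟨i + 1, h⟩ ≤ lam i then 1
        else 0 := by
  have ha : Antitone fun i : Fin p => lam i + (p - 1 - i) := fun i i' hii' => by
    have := hlam hii'
    have : (i : ℕ) ≤ i' := hii'
    dsimp only
    omega
  have hb : Antitone fun j : Fin p => μ j + (p - 1 - j) + 1 := fun j j' hjj' => by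
    have := hμ hjj'
    have : (j : ℕ) ≤ j' := hjj'
    dsimp only
    omega
  have key := Matrix.det_of_ite_lt_of_antitone (R := ℝ) ha hb
  simp only [Nat.lt_add_one_iff] at key
  rw [key]
  congr 1
  exact propext <| forall_congr' fun i =>
    and_congr (by omega) (forall_congr' fun _ => by omega)

open scoped Classical

theorem stmt14_general (p : ℕ) :
    (∀ (lam : Fin p → ℕ), Antitone lam → ∀ (μ : Fin (p+1) → ℕ), Antitone μ →
      Matrix.det (Matrix.of fun i j : Fin (p+1) =>
        (if (if h : (i:ℕ) < p then ((lam ⟨(i:ℕ), h⟩ : ℤ) + ((p - 1 - (i:ℕ) : ℕ) : ℤ))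
              else (-1 : ℤ))
            < (μ j : ℤ) + ((p - (j:ℕ) : ℕ) : ℤ) then (1:ℝ) else 0))
        = if (∀ i : Fin p, lam i ≤ μ i.castSucc ∧ μ i.succ ≤ lam i) then 1 else 0) ∧
    (∀ (lam μ : Fin p → ℕ), Antitone lam → Antitone μ →
      Matrix.det (Matrix.of fun i j : Fin p =>
        (if lam i + (p - 1 - (i:ℕ)) ≤ μ j + (p - 1 - (j:ℕ)) then (1:ℝ) else 0))
        = if (∀ i : Fin p, lam i ≤ μ i ∧
              ∀ h : (i:ℕ) + 1 < p, μ ⟨(i:ℕ) + 1, h⟩ ≤ lam i) then 1 else 0) :=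
  ⟨fun _ hlam _ hμ => det_of_ite_shifted_lt_eq_ite_interlaces hlam hμ,
    fun _ _ hlam hμ => det_of_ite_shifted_le_eq_ite_interlaces hlam hμ⟩

/-- indication of interlacement between two partitions in determinantal
form (strict case for consecutive sizes p, p+1 and weak case for equal sizes p). -/
theorem stmt14 (p : ℕ) (hp : 1 ≤ p) :
    (∀ (lam : Fin p → ℕ), Antitone lam → ∀ (μ : Fin (p+1) → ℕ), Antitone μ →
      Matrix.det (Matrix.of fun i j : Fin (p+1) =>
        (if (if h : (i:ℕ) < p then ((lam ⟨(i:ℕ), h⟩ : ℤ) + ((p - 1 - (i:ℕ) : ℕ) : ℤ))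
              else (-1 : ℤ))
            < (μ j : ℤ) + ((p - (j:ℕ) : ℕ) : ℤ) then (1:ℝ) else 0))
        = if (∀ i : Fin p, lam i ≤ μ i.castSucc ∧ μ i.succ ≤ lam i) then 1 else 0) ∧
    (∀ (lam μ : Fin p → ℕ), Antitone lam → Antitone μ →
      Matrix.det (Matrix.of fun i j : Fin p =>
        (if lam i + (p - 1 - (i:ℕ)) ≤ μ j + (p - 1 - (j:ℕ)) then (1:ℝ) else 0))
        = if (∀ i : Fin p, lam i ≤ μ i ∧
              ∀ h : (i:ℕ) + 1 < p, μ ⟨(i:ℕ) + 1, h⟩ ≤ lam i) then 1 else 0) :=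
  stmt14_general p
end
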